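/- For all x, y ∈ [1.1, 1.9] one has 0 < r(x)·r(y)/d̄ < 1, where d̄ = ∫_{1.1}^{1.9} r(t)·g(t) dt. -/

import Mathlib

noncomputable def a₁ : ℝ := 2.9 / (2.9 / 1.1) ^ (0.95 : ℝ)
noncomputable def a₂ : ℝ := 2.9 / (2.9 / 1.1) ^ (0.45 : ℝ)

/-- The piecewise function `r` on `[1.1, 1.9]`. -/
noncomputable def r (x : ℝ) : ℝ :=
  if x < a₁ then (x - 1) / 2
  else if x ≤ a₂ then
    (x - 1) / 2 - (1 / Real.log (2.9 / 1.1)) *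
      Real.log (2.9 / (1 + 2 * Real.log (2.9 / x) / Real.log (2.9 / 1.1)))
  else (x - 1) / 2 - Real.log (2.9 / 1.9) / Real.log (2.9 / 1.1)

/-- The density `g` on `[1.1, 2.9]`. -/
noncomputable def g (x : ℝ) : ℝ := 1 / (x * Real.log (2.9 / 1.1))

/-!
On `[1.1, 1.9]` the function `r` is positive and at most `0.078`. Its outer branches are affine.
Its middle branch `rMid` is decreasing: with `L = log (2.9 / 1.1)` its derivative is
`1/2 - 2 / (L x (L + 2 log (2.9 / x)))`, which is negative because `x log (2.9 / x) ≤ 2.9 / e`.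
So `rMid` lies between `rMid a₂`, which is barely positive, and `rMid a₁ = (a₁ - 1) / 2 < 0.078`.
Hence `r x r y ≤ 0.078² < 0.0078`. On the other hand `r ≥ 0.0356` and `g ≥ 0.7368` on `[1.1, 1.4]`,
so `d̄ ≥ 0.3 · 0.0356 · 0.7368 > 0.0078`. The logarithms are evaluated through partial sums of
the exponential series.
-/

open Real Set MeasureTheory intervalIntegral

lemma log_le_of_le_sum_range {q c : ℝ} (hq : 0 < q) (hc : 0 ≤ c) (n : ℕ)
    (h : q ≤ ∑ i ∈ Finset.range n, c ^ i / i.factorial) : log q ≤ c :=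
  (log_le_iff_le_exp hq).2 (h.trans (sum_le_exp_of_nonneg hc n))

lemma le_log_of_sum_range_add_le {q c : ℝ} (hq : 0 < q) (hc₀ : 0 ≤ c) (hc₁ : c ≤ 1) {n : ℕ}
    (hn : 0 < n)
    (h : ∑ i ∈ Finset.range n, c ^ i / i.factorial + c ^ n * (n + 1) / (n.factorial * n) ≤ q) :
    c ≤ log q :=
  (le_log_iff_exp_le hq).2 ((exp_bound' hc₀ hc₁ hn).trans h)

lemma mul_log_div_le {c x : ℝ} (hc : 0 < c) (hx : 0 < x) : x * log (c / x) ≤ c / exp 1 := by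
  have h := exp_one_mul_le_exp (x := log (c / x))
  rw [exp_log (div_pos hc hx)] at h
  rw [le_div_iff₀ (exp_pos 1)]
  calc x * log (c / x) * exp 1 = x * (exp 1 * log (c / x)) := by ring
    _ ≤ x * (c / x) := mul_le_mul_of_nonneg_left h hx.le
    _ = c := mul_div_cancel₀ c hx.ne'

lemma le_of_log_div_le_log_div {a b c : ℝ} (ha : 0 < a) (hb : 0 < b) (hc : 0 < c)
    (h : log (c / a) ≤ log (c / b)) : b ≤ a := by
  rwa [log_le_log_iff (div_pos hc ha) (div_pos hc hb), div_le_div_iff_of_pos_left hc ha hb] at h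

lemma log_29_div_11_le : log (2.9 / 1.1) ≤ 0.96941 :=
  log_le_of_le_sum_range (by norm_num) (by norm_num) 10
    (by norm_num [Finset.sum_range_succ, Nat.factorial])

lemma le_log_29_div_11 : 0.96936 ≤ log (2.9 / 1.1) :=
  le_log_of_sum_range_add_le (by norm_num) (by norm_num) (by norm_num) (n := 10) (by norm_num)
    (by norm_num [Finset.sum_range_succ, Nat.factorial])

lemma log_29_div_19_le : log (2.9 / 1.9) ≤ 0.42286 :=
  log_le_of_le_sum_range (by norm_num) (by norm_num) 10
    (by norm_num [Finset.sum_range_succ, Nat.factorial])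

lemma le_log_29_div_19 : 0.42 ≤ log (2.9 / 1.9) :=
  le_log_of_sum_range_add_le (by norm_num) (by norm_num) (by norm_num) (n := 10) (by norm_num)
    (by norm_num [Finset.sum_range_succ, Nat.factorial])

lemma log_29_div_1156_le : log (2.9 / 1.156) ≤ 0.9198 :=
  log_le_of_le_sum_range (by norm_num) (by norm_num) 10
    (by norm_num [Finset.sum_range_succ, Nat.factorial])

lemma le_log_29_div_1873 : 0.4371 ≤ log (2.9 / 1.873) :=
  le_log_of_sum_range_add_le (by norm_num) (by norm_num) (by norm_num) (n := 10) (by norm_num)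
    (by norm_num [Finset.sum_range_succ, Nat.factorial])

lemma le_log_29_div_14 : 0.7279 ≤ log (2.9 / 1.4) :=
  le_log_of_sum_range_add_le (by norm_num) (by norm_num) (by norm_num) (n := 10) (by norm_num)
    (by norm_num [Finset.sum_range_succ, Nat.factorial])

lemma log_29_div_11_pos : 0 < log (2.9 / 1.1) :=
  lt_of_lt_of_le (by norm_num) le_log_29_div_11

lemma a₁_pos : 0 < a₁ := by unfold a₁; positivity

lemma a₂_pos : 0 < a₂ := by unfold a₂; positivity

lemma log_29_div_a₁ : log (2.9 / a₁) = 0.95 * log (2.9 / 1.1) := by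
  rw [a₁, div_div_cancel₀ (by norm_num), log_rpow (by norm_num)]

lemma log_29_div_a₂ : log (2.9 / a₂) = 0.45 * log (2.9 / 1.1) := by
  rw [a₂, div_div_cancel₀ (by norm_num), log_rpow (by norm_num)]

lemma a₁_mem : a₁ ∈ Icc 1.1 1.156 := by
  constructor
  · refine le_of_log_div_le_log_div (c := 2.9) a₁_pos (by norm_num) (by norm_num) ?_
    rw [log_29_div_a₁]
    linarith [log_29_div_11_pos]
  · refine le_of_log_div_le_log_div (c := 2.9) (by norm_num) a₁_pos (by norm_num) ?_
    rw [log_29_div_a₁]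
    linarith [log_29_div_1156_le, le_log_29_div_11]

lemma a₂_mem : a₂ ∈ Icc 1.873 1.9 := by
  constructor
  · refine le_of_log_div_le_log_div (c := 2.9) a₂_pos (by norm_num) (by norm_num) ?_
    rw [log_29_div_a₂]
    linarith [le_log_29_div_1873, log_29_div_11_le]
  · refine le_of_log_div_le_log_div (c := 2.9) (by norm_num) a₂_pos (by norm_num) ?_
    rw [log_29_div_a₂]
    linarith [log_29_div_19_le, le_log_29_div_11]

noncomputable def rMid (x : ℝ) : ℝ :=
  (x - 1) / 2 - (1 / log (2.9 / 1.1)) *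
    log (2.9 / (1 + 2 * log (2.9 / x) / log (2.9 / 1.1)))

lemma r_of_lt {x : ℝ} (hx : x < a₁) : r x = (x - 1) / 2 := if_pos hx

lemma r_of_mem_Icc {x : ℝ} (hx : x ∈ Icc a₁ a₂) : r x = rMid x := by
  rw [r, if_neg hx.1.not_gt, if_pos hx.2, rMid]

lemma r_of_gt {x : ℝ} (hx : a₂ < x) :
    r x = (x - 1) / 2 - log (2.9 / 1.9) / log (2.9 / 1.1) := by
  have ha : a₁ < x := by linarith [a₁_mem.2, a₂_mem.1]
  rw [r, if_neg ha.not_gt, if_neg hx.not_ge]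

lemma rMid_a₁ : rMid a₁ = (a₁ - 1) / 2 := by
  have hL := log_29_div_11_pos.ne'
  have hw : 1 + 2 * (0.95 * log (2.9 / 1.1)) / log (2.9 / 1.1) = 2.9 := by
    field_simp; norm_num
  rw [rMid, log_29_div_a₁, hw, div_self (by norm_num), log_one, mul_zero, sub_zero]

lemma rMid_a₂ : rMid a₂ = (a₂ - 1) / 2 - log (2.9 / 1.9) / log (2.9 / 1.1) := by
  have hL := log_29_div_11_pos.ne'
  have hw : 1 + 2 * (0.45 * log (2.9 / 1.1)) / log (2.9 / 1.1) = 1.9 := by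
    field_simp; norm_num
  rw [rMid, log_29_div_a₂, hw, one_div_mul_eq_div]

lemma hasDerivAt_rMid {x : ℝ} (hx₀ : 0 < x) (hx : x ≤ 2.9) :
    HasDerivAt rMid (1 / 2 - 2 / (log (2.9 / 1.1) * x *
      (log (2.9 / 1.1) + 2 * log (2.9 / x)))) x := by
  have hL := log_29_div_11_pos
  have hℓ : 0 ≤ log (2.9 / x) := log_nonneg (by rw [le_div_iff₀ hx₀]; linarith)
  have hw : 0 < 1 + 2 * log (2.9 / x) / log (2.9 / 1.1) := by positivity
  have hw₁ : 0 < log (2.9 / 1.1) + 2 * log (2.9 / x) := by positivity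
  have hquot : HasDerivAt (fun t : ℝ => 2.9 / t) (-(2.9 / x ^ 2)) x := by
    simpa [div_eq_mul_inv] using (hasDerivAt_inv hx₀.ne').const_mul (2.9 : ℝ)
  have hw' := (((hquot.log (by positivity)).const_mul 2).div_const (log (2.9 / 1.1))).const_add 1
  have hlog := ((hasDerivAt_const x (2.9 : ℝ)).fun_div hw' hw.ne').log (by positivity)
  refine (((hasDerivAt_id x).sub_const 1).div_const 2 |>.sub
    (hlog.const_mul (1 / log (2.9 / 1.1)))).congr_deriv ?_
  field_simp
  ring

lemma rMid_strictAntiOn : StrictAntiOn rMid (Icc 1.1 1.9) := by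
  have hderiv : ∀ x ∈ Icc (1.1 : ℝ) 1.9, HasDerivAt rMid _ x := fun x hx =>
    hasDerivAt_rMid (by linarith [hx.1]) (by linarith [hx.2])
  refine strictAntiOn_of_deriv_neg (convex_Icc _ _)
    (fun x hx => (hderiv x hx).continuousAt.continuousWithinAt) fun x hx => ?_
  rw [interior_Icc] at hx
  have hx₀ : 0 < x := by linarith [hx.1]
  rw [(hderiv x (Ioo_subset_Icc_self hx)).deriv, sub_neg]
  have hL := log_29_div_11_pos
  have hℓ : 0 ≤ log (2.9 / x) := log_nonneg (by rw [le_div_iff₀ hx₀]; linarith [hx.2])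
  have hxℓ : x * log (2.9 / x) ≤ 1.067 := by
    refine (mul_log_div_le (by norm_num) hx₀).trans ?_
    rw [div_le_iff₀ (exp_pos 1)]
    linarith [exp_one_gt_d9]
  have hL₁ := log_29_div_11_le
  have hx₁ : x * log (2.9 / 1.1) ^ 2 ≤ 1.9 * 0.96941 ^ 2 :=
    mul_le_mul hx.2.le (pow_le_pow_left₀ hL.le hL₁ 2) (sq_nonneg _) (by norm_num)
  have hx₂ : log (2.9 / 1.1) * (x * log (2.9 / x)) ≤ 0.96941 * 1.067 :=
    mul_le_mul hL₁ hxℓ (mul_nonneg hx₀.le hℓ) (by norm_num)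
  rw [lt_div_iff₀ (by positivity)]
  linarith

lemma rMid_a₂_pos : 0 < rMid a₂ := by
  have hq : log (2.9 / 1.9) / log (2.9 / 1.1) ≤ 0.4363 := by
    rw [div_le_iff₀ log_29_div_11_pos]
    linarith [log_29_div_19_le, le_log_29_div_11]
  rw [rMid_a₂]
  linarith [a₂_mem.1]

lemma le_rMid_1_4 : 0.0356 ≤ rMid 1.4 := by
  have hL := log_29_div_11_pos
  have hw : 2.5016 ≤ 1 + 2 * log (2.9 / 1.4) / log (2.9 / 1.1) := by
    rw [← sub_le_iff_le_add', le_div_iff₀ hL]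
    linarith [le_log_29_div_14, log_29_div_11_le]
  have hlog : log (2.9 / (1 + 2 * log (2.9 / 1.4) / log (2.9 / 1.1))) ≤ 0.15926 := by
    have h := log_le_sub_one_of_pos (show 0 < 2.9 / (1 + 2 * log (2.9 / 1.4) /
      log (2.9 / 1.1)) by positivity)
    have h' : 2.9 / (1 + 2 * log (2.9 / 1.4) / log (2.9 / 1.1)) ≤ 2.9 / 2.5016 := by gcongr
    linarith [show (2.9 : ℝ) / 2.5016 - 1 ≤ 0.15926 by norm_num]
  have hq : 1 / log (2.9 / 1.1) * log (2.9 / (1 + 2 * log (2.9 / 1.4) / log (2.9 / 1.1)))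
      ≤ 0.16433 := by
    rw [one_div, inv_mul_le_iff₀ hL]
    nlinarith [le_log_29_div_11]
  rw [rMid]
  linarith

lemma r_pos {x : ℝ} (hx : x ∈ Icc (1.1 : ℝ) 1.9) : 0 < r x := by
  rcases lt_or_ge x a₁ with h₁ | h₁
  · rw [r_of_lt h₁]
    linarith [hx.1]
  rcases le_or_gt x a₂ with h₂ | h₂
  · rw [r_of_mem_Icc ⟨h₁, h₂⟩]
    exact rMid_a₂_pos.trans_le
      (rMid_strictAntiOn.antitoneOn hx ⟨by linarith [a₂_mem.1], a₂_mem.2⟩ h₂)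
  · have h := rMid_a₂_pos
    rw [rMid_a₂] at h
    rw [r_of_gt h₂]
    linarith

lemma r_le {x : ℝ} (hx : x ∈ Icc (1.1 : ℝ) 1.9) : r x ≤ 0.078 := by
  rcases lt_or_ge x a₁ with h₁ | h₁
  · rw [r_of_lt h₁]
    linarith [a₁_mem.2]
  rcases le_or_gt x a₂ with h₂ | h₂
  · rw [r_of_mem_Icc ⟨h₁, h₂⟩]
    calc rMid x ≤ rMid a₁ :=
          rMid_strictAntiOn.antitoneOn ⟨a₁_mem.1, by linarith [a₁_mem.2]⟩ hx h₁
      _ = (a₁ - 1) / 2 := rMid_a₁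
      _ ≤ 0.078 := by linarith [a₁_mem.2]
  · have hq : 0.4 ≤ log (2.9 / 1.9) / log (2.9 / 1.1) := by
      rw [le_div_iff₀ log_29_div_11_pos]
      linarith [le_log_29_div_19, log_29_div_11_le]
    rw [r_of_gt h₂]
    linarith [hx.2]

lemma le_r_of_le_1_4 {x : ℝ} (hx : x ∈ Icc (1.1 : ℝ) 1.4) : 0.0356 ≤ r x := by
  have hx' : x ∈ Icc (1.1 : ℝ) 1.9 := ⟨hx.1, by linarith [hx.2]⟩
  rcases lt_or_ge x a₁ with h₁ | h₁
  · rw [r_of_lt h₁]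
    linarith [hx.1]
  · rw [r_of_mem_Icc ⟨h₁, by linarith [hx.2, a₂_mem.1]⟩]
    exact le_rMid_1_4.trans (rMid_strictAntiOn.antitoneOn hx' (by norm_num) hx.2)

lemma g_nonneg {x : ℝ} (hx : 0 ≤ x) : 0 ≤ g x := by
  have := log_29_div_11_pos
  unfold g
  positivity

lemma g_le_one {x : ℝ} (hx : 1.1 ≤ x) : g x ≤ 1 := by
  rw [g, div_le_one (mul_pos (by linarith) log_29_div_11_pos)]
  nlinarith [le_log_29_div_11]

lemma le_g_of_le_1_4 {x : ℝ} (hx₀ : 0 < x) (hx : x ≤ 1.4) : 0.7368 ≤ g x := by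
  rw [g, le_div_iff₀ (mul_pos hx₀ log_29_div_11_pos)]
  nlinarith [log_29_div_11_le, log_29_div_11_pos]

lemma measurable_r : Measurable r :=
  Measurable.ite measurableSet_Iio (by fun_prop)
    (Measurable.ite measurableSet_Iic (by fun_prop) (by fun_prop))

lemma measurable_g : Measurable g := by
  unfold g
  fun_prop

lemma intervalIntegrable_r_mul_g :
    IntervalIntegrable (fun t => r t * g t) volume 1.1 1.9 := by
  rw [intervalIntegrable_iff_integrableOn_Icc_of_le (by norm_num)]
  refine IntegrableOn.of_bound measure_Icc_lt_top
    (measurable_r.mul measurable_g).aestronglyMeasurable 0.078 ?_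
  filter_upwards [ae_restrict_mem measurableSet_Icc] with t ht
  have hg := g_nonneg (x := t) (by linarith [ht.1])
  rw [norm_mul, norm_of_nonneg (r_pos ht).le, norm_of_nonneg hg]
  calc r t * g t ≤ 0.078 * 1 := mul_le_mul (r_le ht) (g_le_one ht.1) hg (by norm_num)
    _ = 0.078 := mul_one _

lemma le_integral_r_mul_g : 0.0078 ≤ ∫ t in (1.1 : ℝ)..1.9, r t * g t := by
  have h₁ : IntervalIntegrable (fun t => r t * g t) volume 1.1 1.4 :=
    intervalIntegrable_r_mul_g.mono_set (uIcc_subset_uIcc (by simp) (by norm_num [mem_uIcc]))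
  have h₂ : IntervalIntegrable (fun t => r t * g t) volume 1.4 1.9 :=
    intervalIntegrable_r_mul_g.mono_set (uIcc_subset_uIcc (by norm_num [mem_uIcc]) (by simp))
  have hleft : (1.4 - 1.1) * (0.0356 * 0.7368) ≤ ∫ t in (1.1 : ℝ)..1.4, r t * g t := by
    have h := integral_mono_on (by norm_num) intervalIntegrable_const h₁ fun t ht =>
      mul_le_mul (le_r_of_le_1_4 ht) (le_g_of_le_1_4 (by linarith [ht.1]) ht.2) (by norm_num)
        (r_pos ⟨ht.1, by linarith [ht.2]⟩).le
    rwa [intervalIntegral.integral_const, smul_eq_mul] at h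
  have hright : 0 ≤ ∫ t in (1.4 : ℝ)..1.9, r t * g t :=
    integral_nonneg (by norm_num) fun t ht =>
      mul_nonneg (r_pos ⟨by linarith [ht.1], ht.2⟩).le (g_nonneg (by linarith [ht.1]))
  rw [← integral_add_adjacent_intervals h₁ h₂]
  linarith

/-- For all `x, y ∈ [1.1, 1.9]`, `0 < r(x) r(y) / d̄ < 1`,
where `d̄ = ∫_{1.1}^{1.9} r(t) g(t) dt`. -/
theorem statement11 :
    ∀ x ∈ Set.Icc (1.1 : ℝ) 1.9, ∀ y ∈ Set.Icc (1.1 : ℝ) 1.9,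
      0 < r x * r y / (∫ t in (1.1 : ℝ)..1.9, r t * g t) ∧
      r x * r y / (∫ t in (1.1 : ℝ)..1.9, r t * g t) < 1 := by
  intro x hx y hy
  have hd := le_integral_r_mul_g
  have hd₀ : 0 < ∫ t in (1.1 : ℝ)..1.9, r t * g t := lt_of_lt_of_le (by norm_num) hd
  refine ⟨div_pos (mul_pos (r_pos hx) (r_pos hy)) hd₀, (div_lt_one hd₀).2 ?_⟩
  calc r x * r y ≤ 0.078 * 0.078 := mul_le_mul (r_le hx) (r_le hy) (r_pos hy).le (by norm_num)
    _ < 0.0078 := by norm_num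
    _ ≤ _ := hd
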